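/- arXiv:2207.11299 — 5 statements merged into one kernel-verified Lean document; each statement's English description precedes it below -/
import Mathlib

section
/- Let A ∈ ℝ^{m×n}, b ∈ ℝ^m, c ∈ ℝ^n. Suppose the linear program minimize cᵀx subject to Ax = b (no nonnegativity constraint) attains its minimum at some y ∈ ℝ^n. Then there exists a minimizer x* ∈ ℝ^n with Ax* = b, cᵀx* = cᵀy, and x* has at most m nonzero entries. -/
open Matrix

/-!
If an optimal `y` has more than `m` nonzero entries, the corresponding columns of `A` are linearly
dependent, which gives `d ≠ 0` supported inside the support of `y` with `A d = 0`. Both `y + d` and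
`y - d` are feasible, so optimality forces `c ⬝ d = 0`; hence every `y + t d` is again optimal, and
choosing `t` to cancel one coordinate of `y` shrinks the support. Induct on the support size.
-/

variable {K ι κ : Type*} [Fintype ι]

theorem Matrix.mulVec_finsupp_eq_linearCombination [CommSemiring K] (A : Matrix κ ι K)
    (l : ι →₀ K) : A *ᵥ ⇑l = Finsupp.linearCombination K A.col l := by
  rw [Finsupp.linearCombination_apply, Finsupp.sum_fintype _ _ fun _ => zero_smul K (A.col _)]
  ext r
  simp [mulVec, dotProduct, mul_comm]

theorem Matrix.exists_mulVec_eq_zero_of_card_lt [Fintype κ] [Field K] (A : Matrix κ ι K)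
    (s : Finset ι) (hs : Fintype.card κ < s.card) :
    ∃ d : ι → K, A *ᵥ d = 0 ∧ d ≠ 0 ∧ ∀ i ∉ s, d i = 0 := by
  have hdep : ¬ LinearIndepOn K A.col (s : Set ι) := fun h => by
    have := h.fintype_card_le_finrank
    simp only [Finset.coe_sort_coe, Fintype.card_coe, Module.finrank_fintype_fun_eq_card] at this
    omega
  simp only [linearIndepOn_iff, not_forall] at hdep
  obtain ⟨l, hls, hl, hl0⟩ := hdep
  refine ⟨l, by rw [mulVec_finsupp_eq_linearCombination, hl], by simpa using hl0, fun i hi => ?_⟩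
  exact Finsupp.notMem_support_iff.mp fun h => hi (hls h)

theorem Matrix.dotProduct_eq_zero_of_isMinimizer [Fintype κ] [CommRing K] [PartialOrder K]
    [IsOrderedAddMonoid K] {A : Matrix κ ι K} {b : κ → K} {c y d : ι → K} (hy : A *ᵥ y = b)
    (hopt : ∀ x, A *ᵥ x = b → c ⬝ᵥ y ≤ c ⬝ᵥ x) (hd : A *ᵥ d = 0) : c ⬝ᵥ d = 0 := by
  have hplus := hopt (y + d) (by rw [mulVec_add, hd, add_zero, hy])
  have hminus := hopt (y - d) (by rw [mulVec_sub, hd, sub_zero, hy])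
  rw [dotProduct_add] at hplus
  rw [dotProduct_sub] at hminus
  exact le_antisymm (by simpa using hminus) (by simpa using hplus)

theorem exists_card_support_add_smul_lt [Field K] [DecidableEq K] {y d : ι → K} (hd : d ≠ 0)
    (hsupp : ∀ i, y i = 0 → d i = 0) :
    ∃ t : K, ({i | (y + t • d) i ≠ 0} : Finset ι).card < ({i | y i ≠ 0} : Finset ι).card := by
  obtain ⟨j, hj⟩ := Function.ne_iff.mp hd
  have hyj : y j ≠ 0 := fun h => hj (hsupp j h)
  refine ⟨-y j / d j, Finset.card_lt_card ⟨fun i => ?_, fun hsub => ?_⟩⟩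
  · simp only [Finset.mem_filter, Finset.mem_univ, true_and]
    intro hi hyi
    simp [hyi, hsupp i hyi] at hi
  · have := hsub (Finset.mem_filter.mpr ⟨Finset.mem_univ j, hyj⟩)
    simp only [Finset.mem_filter, Finset.mem_univ, true_and] at this
    exact this (by simp [div_mul_cancel₀ _ hj])

theorem stmt13 (m n : ℕ) (A : Matrix (Fin m) (Fin n) ℝ) (b : Fin m → ℝ)
    (c : Fin n → ℝ) (y : Fin n → ℝ) (hfeas : A.mulVec y = b)
    (hopt : ∀ x, A.mulVec x = b → c ⬝ᵥ y ≤ c ⬝ᵥ x) :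
    ∃ x' : Fin n → ℝ, A.mulVec x' = b ∧ c ⬝ᵥ x' = c ⬝ᵥ y ∧
      (Finset.univ.filter fun i => x' i ≠ 0).card ≤ m := by
  induction hk : ({i | y i ≠ 0} : Finset (Fin n)).card using Nat.strong_induction_on
    generalizing y with
  | _ k ih =>
  by_cases hkm : k ≤ m
  · exact ⟨y, hfeas, rfl, hk ▸ hkm⟩
  obtain ⟨d, hAd, hd0, hds⟩ :=
    A.exists_mulVec_eq_zero_of_card_lt {i | y i ≠ 0} (by rw [Fintype.card_fin]; omega)
  obtain ⟨t, ht⟩ := exists_card_support_add_smul_lt hd0 fun i hyi => hds i (by simpa using hyi)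
  have hcd := dotProduct_eq_zero_of_isMinimizer hfeas hopt hAd
  have hfeas' : A *ᵥ (y + t • d) = b := by
    rw [mulVec_add, mulVec_smul, hAd, smul_zero, add_zero, hfeas]
  have hval : c ⬝ᵥ (y + t • d) = c ⬝ᵥ y := by
    rw [dotProduct_add, dotProduct_smul, hcd, smul_zero, add_zero]
  obtain ⟨x', hx', hcx', hsx'⟩ :=
    ih _ (hk ▸ ht) (y + t • d) hfeas' (fun x hx => hval ▸ hopt x hx) rfl
  exact ⟨x', hx', hcx'.trans hval, hsx'⟩
end

section
/- Let Q₀,…,Q_k be symmetric positive semidefinite n×n matrices, c₀,…,c_k ∈ ℝ^n, d₁,…,d_k ∈ ℝ, A ∈ ℝ^{m×n}, b ∈ ℝ^m. If y is an optimal solution of the QCQP: minimize xᵀQ₀x + c₀ᵀx subject to xᵀQ_i x + c_iᵀx + d_i ≤ 0 (i = 1,…,k) and Ax = b, then y is also an optimal solution of the linear program: minimize c₀ᵀx subject to P_i x = P_i y (i = 0,…,k), c_iᵀx = c_iᵀy (i = 1,…,k), Ax = b, where Q_i = P_iᵀP_i. -/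
open Matrix

lemma quad_eq {r n : ℕ} (P : Matrix (Fin r) (Fin n) ℝ) (x : Fin n → ℝ) :
    x ⬝ᵥ (Pᵀ * P).mulVec x = P.mulVec x ⬝ᵥ P.mulVec x := by
  rw [← mulVec_mulVec, dotProduct_mulVec, vecMul_transpose]

theorem stmt15 (n m k : ℕ)
    (r0 : ℕ) (P0 : Matrix (Fin r0) (Fin n) ℝ) (Q0 : Matrix (Fin n) (Fin n) ℝ)
    (c0 : Fin n → ℝ)
    (rk : Fin k → ℕ) (P : ∀ i, Matrix (Fin (rk i)) (Fin n) ℝ)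
    (Q : Fin k → Matrix (Fin n) (Fin n) ℝ) (c : Fin k → Fin n → ℝ) (d : Fin k → ℝ)
    (A : Matrix (Fin m) (Fin n) ℝ) (b : Fin m → ℝ)
    (hQ0 : Q0 = P0ᵀ * P0) (hQ : ∀ i, Q i = (P i)ᵀ * P i)
    (y : Fin n → ℝ)
    (hyfeas : (∀ i, y ⬝ᵥ (Q i).mulVec y + c i ⬝ᵥ y + d i ≤ 0) ∧ A.mulVec y = b)
    (hyopt : ∀ x : Fin n → ℝ,
      (∀ i, x ⬝ᵥ (Q i).mulVec x + c i ⬝ᵥ x + d i ≤ 0) → A.mulVec x = b →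
      y ⬝ᵥ Q0.mulVec y + c0 ⬝ᵥ y ≤ x ⬝ᵥ Q0.mulVec x + c0 ⬝ᵥ x) :
    ∀ x : Fin n → ℝ, P0.mulVec x = P0.mulVec y →
      (∀ i, (P i).mulVec x = (P i).mulVec y) →
      (∀ i, c i ⬝ᵥ x = c i ⬝ᵥ y) → A.mulVec x = b →
      c0 ⬝ᵥ y ≤ c0 ⬝ᵥ x := by
  intro x h0 hP hc hA
  have hq : ∀ i, x ⬝ᵥ (Q i).mulVec x = y ⬝ᵥ (Q i).mulVec y := fun i => by
    rw [hQ i, quad_eq, quad_eq, hP i]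
  have hq0 : x ⬝ᵥ Q0.mulVec x = y ⬝ᵥ Q0.mulVec y := by
    rw [hQ0, quad_eq, quad_eq, h0]
  have := hyopt x (fun i => by rw [hq i, hc i]; exact hyfeas.1 i) hA
  rw [hq0] at this
  linarith
end

section
/- Let Q₀,…,Q_k be symmetric PSD n×n matrices, c_i ∈ ℝ^n, d_i ∈ ℝ, A ∈ ℝ^{m×n}, b ∈ ℝ^m. If the QCQP (minimize xᵀQ₀x + c₀ᵀx subject to xᵀQ_i x + c_iᵀx + d_i ≤ 0 for i=1,…,k and Ax = b) attains its minimum, then it has an optimal solution x* with card(x*) ≤ m − 1 + Σ_{i=0}^{k} (rank(Q_i) + 1). -/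
/-!
Moving an optimal point `y` along a direction `w` of the common null space `W` of `A`, `Q₀`, the
`Qᵢ` and the `cᵢ` leaves every constraint unchanged and shifts the objective by `c₀ ⬝ᵥ w`
(the matrices are symmetric); optimality of `y` forces `c₀ ⊥ W`, so all of `y + W` is optimal.
Every affine subspace `y + W` of `ℝⁿ` contains a point with at most `n - dim W` nonzero
coordinates, obtained by repeatedly cancelling a coordinate with a vector of `W` supported inside
the current support, and `n - dim W ≤ m + rank Q₀ + ∑ᵢ (rank Qᵢ + 1)`.
-/

open Matrix Module Finset

section Codimension

variable {K V : Type*} [Field K] [AddCommGroup V] [Module K V] [FiniteDimensional K V]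

theorem Submodule.finrank_sub_finrank_inf_le (s t : Submodule K V) :
    finrank K V - finrank K ↥(s ⊓ t) ≤
      (finrank K V - finrank K s) + (finrank K V - finrank K t) := by
  have := Submodule.finrank_sup_add_finrank_inf_eq s t
  have := (s ⊔ t).finrank_le
  have := s.finrank_le
  have := t.finrank_le
  omega

theorem Submodule.finrank_sub_finrank_finsetInf_le {α : Type*} (s : Finset α)
    (p : α → Submodule K V) :
    finrank K V - finrank K ↥(s.inf p) ≤ ∑ a ∈ s, (finrank K V - finrank K (p a)) := by
  induction s using Finset.cons_induction with
  | empty => rw [Finset.inf_empty, finrank_top, Nat.sub_self]; exact Nat.zero_le _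
  | cons a s ha ih =>
    rw [Finset.inf_cons, Finset.sum_cons]
    exact (finrank_sub_finrank_inf_le _ _).trans (by omega)

theorem Submodule.finrank_sub_finrank_iInf_le {α : Type*} [Fintype α] (p : α → Submodule K V) :
    finrank K V - finrank K ↥(⨅ a, p a) ≤ ∑ a, (finrank K V - finrank K (p a)) := by
  rw [← Finset.inf_univ_eq_iInf]
  exact finrank_sub_finrank_finsetInf_le _ _

theorem LinearMap.finrank_sub_finrank_ker {W : Type*} [AddCommGroup W] [Module K W]
    (f : V →ₗ[K] W) : finrank K V - finrank K (ker f) = finrank K (range f) := by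
  have := f.finrank_range_add_finrank_ker
  omega

end Codimension

section Sparsification

variable {K ι : Type*} [Field K] [DecidableEq K] [Fintype ι]

theorem exists_sub_mem_card_support_lt (W : Submodule K (ι → K)) {x : ι → K}
    (hx : Fintype.card ι - finrank K W < #{i | x i ≠ 0}) :
    ∃ x', x' - x ∈ W ∧ #{i | x' i ≠ 0} < #{i | x i ≠ 0} := by
  -- its kernel consists of the vectors vanishing wherever `x` does
  set restrict := LinearMap.funLeft K K ((↑) : {j // x j = 0} → ι)
  have hvanishing : ∀ z ∈ LinearMap.ker restrict, ∀ j, x j = 0 → z j = 0 := fun z hz j hj =>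
    congrFun (LinearMap.mem_ker.mp hz) ⟨j, hj⟩
  have hdim : finrank K (ι → K) < finrank K W + finrank K (LinearMap.ker restrict) := by
    have hrange := (LinearMap.range restrict).finrank_le
    have hsplit := Finset.card_filter_add_card_filter_not (s := univ) (fun i => x i ≠ 0)
    have := restrict.finrank_range_add_finrank_ker
    simp only [finrank_fintype_fun_eq_card, Fintype.card_subtype, not_not, card_univ]
      at hrange hsplit this ⊢
    omega
  obtain ⟨z, hzW, hzV, hz0⟩ : ∃ z ∈ W, z ∈ LinearMap.ker restrict ∧ z ≠ 0 := by
    have := mt Submodule.finrank_add_finrank_le_of_disjoint hdim.not_ge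
    simpa [Submodule.disjoint_def] using this
  obtain ⟨i, hzi⟩ := Function.ne_iff.mp hz0
  refine ⟨x - (x i / z i) • z, by simpa using W.smul_mem (x i / z i) hzW, card_lt_card ?_⟩
  refine Finset.ssubset_iff_of_subset (fun j => ?_) |>.mpr ⟨i, ?_, ?_⟩
  · simp only [mem_filter, mem_univ, true_and]
    intro hj hxj
    simp [hxj, hvanishing z hzV j hxj] at hj
  · simpa using fun h => hzi (hvanishing z hzV i h)
  · simp [div_mul_cancel₀ _ hzi]

theorem exists_sub_mem_card_support_le (W : Submodule K (ι → K)) (x : ι → K) :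
    ∃ x', x' - x ∈ W ∧ #{i | x' i ≠ 0} ≤ Fintype.card ι - finrank K W := by
  induction hx : #{i | x i ≠ 0} using Nat.strong_induction_on generalizing x with
  | _ s ih =>
  by_cases hle : s ≤ Fintype.card ι - finrank K W
  · exact ⟨x, by simp, hx ▸ hle⟩
  obtain ⟨x₁, hx₁, hlt⟩ := exists_sub_mem_card_support_lt W (hx ▸ not_le.mp hle)
  obtain ⟨x', hx', hcard⟩ := ih _ (hx ▸ hlt) x₁ rfl
  exact ⟨x', by simpa using W.add_mem hx' hx₁, hcard⟩

end Sparsification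

theorem Matrix.IsSymm.add_dotProduct_mulVec_add {R ι : Type*} [CommRing R] [Fintype ι]
    {M : Matrix ι ι R} (hM : M.IsSymm) {w : ι → R} (hw : M *ᵥ w = 0) (x c : ι → R) :
    (x + w) ⬝ᵥ M *ᵥ (x + w) + c ⬝ᵥ (x + w) = x ⬝ᵥ M *ᵥ x + c ⬝ᵥ x + c ⬝ᵥ w := by
  have hwx : w ⬝ᵥ M *ᵥ x = 0 := by
    rw [dotProduct_mulVec, ← mulVec_transpose, hM.eq, hw, zero_dotProduct]
  rw [mulVec_add, hw, add_zero, add_dotProduct, hwx, dotProduct_add]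
  ring

section QCQP

variable {ι μ κ : Type*} [Fintype ι]

def qcqpDirections (A : Matrix μ ι ℝ) (Q₀ : Matrix ι ι ℝ) (Q : κ → Matrix ι ι ℝ)
    (c : κ → ι → ℝ) : Submodule ℝ (ι → ℝ) :=
  LinearMap.ker A.mulVecLin ⊓ LinearMap.ker Q₀.mulVecLin ⊓
    ⨅ i, (LinearMap.ker (Q i).mulVecLin ⊓ LinearMap.ker (dotProductBilin ℝ ℝ (c i)))

variable {A : Matrix μ ι ℝ} {Q₀ : Matrix ι ι ℝ} {Q : κ → Matrix ι ι ℝ} {c : κ → ι → ℝ}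

theorem mem_qcqpDirections {w : ι → ℝ} :
    w ∈ qcqpDirections A Q₀ Q c ↔
      A *ᵥ w = 0 ∧ Q₀ *ᵥ w = 0 ∧ ∀ i, Q i *ᵥ w = 0 ∧ c i ⬝ᵥ w = 0 := by
  simp [qcqpDirections, and_assoc]

theorem quadratic_add_of_mem_qcqpDirections {i : κ} (hQ : (Q i).IsSymm) {w : ι → ℝ}
    (hw : w ∈ qcqpDirections A Q₀ Q c) (x : ι → ℝ) :
    (x + w) ⬝ᵥ Q i *ᵥ (x + w) + c i ⬝ᵥ (x + w) = x ⬝ᵥ Q i *ᵥ x + c i ⬝ᵥ x := by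
  have hQw := (mem_qcqpDirections.mp hw).2.2 i
  rw [hQ.add_dotProduct_mulVec_add hQw.1, hQw.2, add_zero]

theorem card_sub_finrank_qcqpDirections_le [Fintype μ] [Fintype κ] :
    Fintype.card ι - finrank ℝ (qcqpDirections A Q₀ Q c) ≤
      Fintype.card μ + Q₀.rank + ∑ i, ((Q i).rank + 1) := by
  open Submodule LinearMap in
  rw [← finrank_fintype_fun_eq_card ℝ]
  refine (finrank_sub_finrank_inf_le _ _).trans <| add_le_add
    ((finrank_sub_finrank_inf_le _ _).trans <| add_le_add ?_ (finrank_sub_finrank_ker _).le)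
    ((finrank_sub_finrank_iInf_le _).trans <| sum_le_sum fun i _ =>
      (finrank_sub_finrank_inf_le _ _).trans <| add_le_add (finrank_sub_finrank_ker _).le ?_)
  · rw [finrank_sub_finrank_ker]
    exact A.rank_le_card_height
  · rw [finrank_sub_finrank_ker]
    exact (finrank_le _).trans (finrank_self ℝ).le

end QCQP

theorem stmt16 (n m k : ℕ)
    (Q0 : Matrix (Fin n) (Fin n) ℝ) (c0 : Fin n → ℝ)
    (Q : Fin k → Matrix (Fin n) (Fin n) ℝ) (c : Fin k → Fin n → ℝ) (d : Fin k → ℝ)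
    (A : Matrix (Fin m) (Fin n) ℝ) (b : Fin m → ℝ)
    (hQ0 : Q0.PosSemidef) (hQ : ∀ i, (Q i).PosSemidef)
    (y : Fin n → ℝ)
    (hyfeas : (∀ i, y ⬝ᵥ (Q i).mulVec y + c i ⬝ᵥ y + d i ≤ 0) ∧ A.mulVec y = b)
    (hyopt : ∀ x : Fin n → ℝ,
      (∀ i, x ⬝ᵥ (Q i).mulVec x + c i ⬝ᵥ x + d i ≤ 0) → A.mulVec x = b →
      y ⬝ᵥ Q0.mulVec y + c0 ⬝ᵥ y ≤ x ⬝ᵥ Q0.mulVec x + c0 ⬝ᵥ x) :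
    ∃ x' : Fin n → ℝ,
      (∀ i, x' ⬝ᵥ (Q i).mulVec x' + c i ⬝ᵥ x' + d i ≤ 0) ∧ A.mulVec x' = b ∧
      x' ⬝ᵥ Q0.mulVec x' + c0 ⬝ᵥ x' = y ⬝ᵥ Q0.mulVec y + c0 ⬝ᵥ y ∧
      (Finset.univ.filter fun i => x' i ≠ 0).card ≤
        m - 1 + ((Q0.rank + 1) + ∑ i, ((Q i).rank + 1)) := by
  have hcodim := card_sub_finrank_qcqpDirections_le (A := A) (Q₀ := Q0) (Q := Q) (c := c)
  set W := qcqpDirections A Q0 Q c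
  have hsymm {M : Matrix (Fin n) (Fin n) ℝ} (hM : M.PosSemidef) : M.IsSymm :=
    isHermitian_iff_isSymm.mp hM.1
  have hfeas {w} (hw : w ∈ W) :
      (∀ i, (y + w) ⬝ᵥ Q i *ᵥ (y + w) + c i ⬝ᵥ (y + w) + d i ≤ 0) ∧ A *ᵥ (y + w) = b :=
    ⟨fun i => quadratic_add_of_mem_qcqpDirections (hsymm (hQ i)) hw y ▸ hyfeas.1 i,
      by rw [mulVec_add, (mem_qcqpDirections.mp hw).1, add_zero, hyfeas.2]⟩
  have hobj {w} (hw : w ∈ W) :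
      (y + w) ⬝ᵥ Q0 *ᵥ (y + w) + c0 ⬝ᵥ (y + w) = y ⬝ᵥ Q0 *ᵥ y + c0 ⬝ᵥ y + c0 ⬝ᵥ w :=
    (hsymm hQ0).add_dotProduct_mulVec_add (mem_qcqpDirections.mp hw).2.1 y c0
  have hc0 {w} (hw : w ∈ W) : c0 ⬝ᵥ w = 0 := by
    have hplus := hyopt _ (hfeas hw).1 (hfeas hw).2
    have hminus := hyopt _ (hfeas (W.neg_mem hw)).1 (hfeas (W.neg_mem hw)).2
    rw [hobj hw] at hplus
    rw [hobj (W.neg_mem hw), dotProduct_neg] at hminus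
    linarith
  obtain ⟨x', hx'W, hcard⟩ := exists_sub_mem_card_support_le W y
  obtain ⟨w, hw, rfl⟩ : ∃ w ∈ W, x' = y + w := ⟨x' - y, hx'W, by abel⟩
  refine ⟨y + w, (hfeas hw).1, (hfeas hw).2, by rw [hobj hw, hc0 hw, add_zero], hcard.trans ?_⟩
  simp only [Fintype.card_fin] at hcodim ⊢
  omega
end

section
/- Let A_i ∈ ℝ^{m_i×n}, b_i ∈ ℝ^{m_i}, c_i ∈ ℝ^n, d_i ∈ ℝ for i = 1,…,k, F ∈ ℝ^{m×n}, c ∈ ℝ^n, g ∈ ℝ^m. If the SOCP (minimize cᵀx subject to ‖A_i x + b_i‖ ≤ c_iᵀx + d_i for all i and Fx = g) attains its minimum, then it has an optimal solution x* with card(x*) ≤ m + Σ_{i=1}^{k} (m_i + 1). -/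
/-!
Fix an optimal `y`. Every `x` with `F x = F y`, `A_i x = A_i y` and `c_iᵀ x = c_iᵀ y` is again
feasible, so `y` minimizes the linear objective on this affine subspace, which forces the
objective to be constant there. The subspace is a fiber of a linear map into a space of dimension
`m + ∑ (m_i + 1)`, and every fiber of a linear map `Kⁿ → V` contains a point with at most `dim V`
nonzero coordinates: as long as the support is larger, the map restricted to the support has a
nonzero kernel vector, and moving along it kills one more coordinate.
-/

open Finset Matrix Module

section Sparsification

variable {K σ V : Type*} [Field K] [Fintype σ] [AddCommGroup V] [Module K V]
  [FiniteDimensional K V]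

theorem LinearMap.exists_ne_zero_map_eq_zero_of_finrank_lt_card (L : (σ → K) →ₗ[K] V)
    (s : Finset σ) (hs : finrank K V < #s) :
    ∃ z : σ → K, z ≠ 0 ∧ L z = 0 ∧ ∀ i ∉ s, z i = 0 := by
  set e := Function.ExtendByZero.linearMap K (Subtype.val : s → σ)
  have hker : LinearMap.ker (L ∘ₗ e) ≠ ⊥ :=
    LinearMap.ker_ne_bot_of_finrank_lt (by simpa using hs)
  obtain ⟨w, hw, hw0⟩ := Submodule.exists_mem_ne_zero_of_ne_bot hker
  obtain ⟨j, hj⟩ : ∃ j, w j ≠ 0 := Function.ne_iff.mp hw0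
  refine ⟨e w, Function.ne_iff.mpr ⟨j, ?_⟩, hw, fun i hi => ?_⟩
  · simpa [e, Subtype.val_injective.extend_apply] using hj
  · exact Function.extend_apply' _ _ _ (by simpa using hi)

theorem LinearMap.exists_map_eq_card_support_lt [DecidableEq K]
    (L : (σ → K) →ₗ[K] V) (y : σ → K) (hy : finrank K V < #{i | y i ≠ 0}) :
    ∃ x, L x = L y ∧ #{i | x i ≠ 0} < #{i | y i ≠ 0} := by
  classical
  obtain ⟨z, hz0, hLz, hz⟩ := L.exists_ne_zero_map_eq_zero_of_finrank_lt_card _ hy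
  obtain ⟨j, hj⟩ : ∃ j, z j ≠ 0 := Function.ne_iff.mp hz0
  have hjy : y j ≠ 0 := fun h => hj (hz j (by simpa using h))
  -- Moving along `z` until the `j`-th coordinate vanishes shrinks the support.
  set x := y - (y j / z j) • z
  have hsub : ({i | x i ≠ 0} : Finset σ) ⊆ ({i | y i ≠ 0} : Finset σ).erase j := by
    intro i
    simp only [mem_erase, mem_filter, mem_univ, true_and]
    intro hi
    refine ⟨?_, fun hyi => hi ?_⟩
    · rintro rfl
      apply hi
      simp [x, hj]
    · simp [x, hyi, hz i (by simpa using hyi)]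
  refine ⟨x, by simp [x, hLz], (card_le_card hsub).trans_lt ?_⟩
  exact card_erase_lt_of_mem (by simpa using hjy)

theorem LinearMap.exists_map_eq_card_support_le_finrank [DecidableEq K]
    (L : (σ → K) →ₗ[K] V) (y : σ → K) :
    ∃ x, L x = L y ∧ #{i | x i ≠ 0} ≤ finrank K V := by
  induction hN : #{i | y i ≠ 0} using Nat.strong_induction_on generalizing y with
  | _ N ih =>
    by_cases hle : N ≤ finrank K V
    · exact ⟨y, rfl, hN ▸ hle⟩
    obtain ⟨x, hx, hlt⟩ := L.exists_map_eq_card_support_lt y (by omega)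
    obtain ⟨x', hx', hle'⟩ := ih _ (hN ▸ hlt) x rfl
    exact ⟨x', hx'.trans hx, hle'⟩

end Sparsification

theorem AddMonoidHom.eq_of_isMinOn_fiber {M V G : Type*} [AddCommGroup M] [AddCommGroup V]
    [AddCommGroup G] [PartialOrder G] [IsOrderedAddMonoid G] (L : M →+ V) (φ : M →+ G)
    {x y : M} (hy : IsMinOn φ {x | L x = L y} y) (hx : L x = L y) : φ x = φ y := by
  -- `y + (y - x)` lies in the same fiber, on the other side of `y`.
  have hmirror : L (y + (y - x)) = L y := by simp [hx]
  have h₁ := isMinOn_iff.mp hy x hx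
  have h₂ := isMinOn_iff.mp hy _ hmirror
  rw [map_add, map_sub] at h₂
  exact le_antisymm (by simpa using h₂) h₁

section SOCP

variable {R n p ι : Type*} [CommSemiring R] [Fintype n] {q : ι → Type*}

def socpConstraintMap (F : Matrix p n R) (A : ∀ i, Matrix (q i) n R) (c : ι → n → R) :
    (n → R) →ₗ[R] (p → R) × ((i : ι) → (q i → R) × R) :=
  F.mulVecLin.prod (LinearMap.pi fun i => (A i).mulVecLin.prod (dotProductBilin R R (c i)))

theorem socpConstraintMap_eq_iff (F : Matrix p n R) (A : ∀ i, Matrix (q i) n R)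
    (c : ι → n → R) {x y : n → R} :
    socpConstraintMap F A c x = socpConstraintMap F A c y ↔
      F *ᵥ x = F *ᵥ y ∧ ∀ i, A i *ᵥ x = A i *ᵥ y ∧ c i ⬝ᵥ x = c i ⬝ᵥ y := by
  simp [socpConstraintMap, funext_iff]

end SOCP

theorem stmt17 (n m k : ℕ) (mi : Fin k → ℕ)
    (A : ∀ i, Matrix (Fin (mi i)) (Fin n) ℝ) (b : ∀ i, Fin (mi i) → ℝ)
    (ci : Fin k → Fin n → ℝ) (d : Fin k → ℝ)
    (F : Matrix (Fin m) (Fin n) ℝ) (g : Fin m → ℝ) (c : Fin n → ℝ)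
    (y : Fin n → ℝ)
    (hyfeas : (∀ i, Real.sqrt (∑ j, ((A i).mulVec y j + b i j) ^ 2) ≤
        ci i ⬝ᵥ y + d i) ∧ F.mulVec y = g)
    (hyopt : ∀ x : Fin n → ℝ,
      (∀ i, Real.sqrt (∑ j, ((A i).mulVec x j + b i j) ^ 2) ≤ ci i ⬝ᵥ x + d i) →
      F.mulVec x = g → c ⬝ᵥ y ≤ c ⬝ᵥ x) :
    ∃ x' : Fin n → ℝ,
      (∀ i, Real.sqrt (∑ j, ((A i).mulVec x' j + b i j) ^ 2) ≤ ci i ⬝ᵥ x' + d i) ∧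
      F.mulVec x' = g ∧ c ⬝ᵥ x' = c ⬝ᵥ y ∧
      (Finset.univ.filter fun i => x' i ≠ 0).card ≤ m + ∑ i, (mi i + 1) := by
  set L := socpConstraintMap F A ci
  have hfeas : ∀ x, L x = L y →
      (∀ i, √(∑ j, ((A i *ᵥ x) j + b i j) ^ 2) ≤ ci i ⬝ᵥ x + d i) ∧ F *ᵥ x = g := by
    intro x hx
    obtain ⟨hF, hAc⟩ := (socpConstraintMap_eq_iff F A ci).mp hx
    refine ⟨fun i => ?_, hF.trans hyfeas.2⟩
    rw [(hAc i).1, (hAc i).2]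
    exact hyfeas.1 i
  have hmin : IsMinOn (c ⬝ᵥ ·) {x | L x = L y} y :=
    isMinOn_iff.mpr fun x hx => hyopt x (hfeas x hx).1 (hfeas x hx).2
  obtain ⟨x, hx, hcard⟩ := L.exists_map_eq_card_support_le_finrank y
  refine ⟨x, (hfeas x hx).1, (hfeas x hx).2, ?_, hcard.trans_eq ?_⟩
  · exact L.toAddMonoidHom.eq_of_isMinOn_fiber (dotProductBilin ℝ ℝ c).toAddMonoidHom hmin hx
  · simp [finrank_pi_fintype]
end

section
/- Tightness of SOCP sparsification: for given n, m, m₁,…,m_k with m + Σ_{i=1}^k (m_i+1) < n, there exist data (A_i, b_i, c_i, d_i, F, g, c) defining a feasible SOCP such that every optimal solution y satisfies card(y) ≥ m + Σ_{i=1}^k (m_i + 1). Concretely, with the block-structured data of the paper's example, every feasible z satisfies cᵀz ≥ k, the all-ones-prefix vector attains value k, and any optimal y has y_j = 1 for all j ≤ m + Σ_{i=1}^k (m_i+1). -/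
open Matrix

/-- Feasibility for the SOCP: `‖Aᵢx + bᵢ‖ ≤ cᵢᵀx + dᵢ` for all `i` and `Fx = g`. -/
def SOCPFeasible {n m k : ℕ} {mi : Fin k → ℕ}
    (A : ∀ i, Matrix (Fin (mi i)) (Fin n) ℝ) (b : ∀ i, Fin (mi i) → ℝ)
    (ci : Fin k → Fin n → ℝ) (d : Fin k → ℝ)
    (F : Matrix (Fin m) (Fin n) ℝ) (g : Fin m → ℝ) (x : Fin n → ℝ) : Prop :=
  (∀ i, Real.sqrt (∑ j, ((A i).mulVec x j + b i j) ^ 2) ≤ ci i ⬝ᵥ x + d i) ∧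
    F.mulVec x = g

theorem stmt18 (n m k : ℕ) (mi : Fin k → ℕ)
    (hlt : m + ∑ i, (mi i + 1) < n) :
    ∃ (A : ∀ i, Matrix (Fin (mi i)) (Fin n) ℝ) (b : ∀ i, Fin (mi i) → ℝ)
      (ci : Fin k → Fin n → ℝ) (d : Fin k → ℝ)
      (F : Matrix (Fin m) (Fin n) ℝ) (g : Fin m → ℝ) (c : Fin n → ℝ),
      (∃ x : Fin n → ℝ, SOCPFeasible A b ci d F g x) ∧
      (∀ z : Fin n → ℝ, SOCPFeasible A b ci d F g z → (k : ℝ) ≤ c ⬝ᵥ z) ∧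
      (∃ x' : Fin n → ℝ, SOCPFeasible A b ci d F g x' ∧ c ⬝ᵥ x' = (k : ℝ) ∧
        (Finset.univ.filter fun i => x' i ≠ 0).card = m + ∑ i, (mi i + 1)) ∧
      (∀ y : Fin n → ℝ, SOCPFeasible A b ci d F g y →
        (∀ x, SOCPFeasible A b ci d F g x → c ⬝ᵥ y ≤ c ⬝ᵥ x) →
        m + ∑ i, (mi i + 1) ≤ (Finset.univ.filter fun i => y i ≠ 0).card) := by
  classical
  -- index type for the forced coordinates
  set T := Fin m ⊕ ((i : Fin k) × (Fin (mi i) ⊕ Unit)) with hT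
  have hcardT : Fintype.card T = m + ∑ i, (mi i + 1) := by
    simp [hT, Fintype.card_sigma]
  have hcard : Fintype.card T ≤ Fintype.card (Fin n) := by
    simp [hcardT]; omega
  obtain ⟨ι⟩ := Function.Embedding.nonempty_of_card_le hcard
  -- data
  set A : ∀ i, Matrix (Fin (mi i)) (Fin n) ℝ :=
    fun i r j => if j = ι (Sum.inr ⟨i, Sum.inl r⟩) then 1 else 0 with hA
  set b : ∀ i, Fin (mi i) → ℝ := fun _ _ => -1 with hb
  set ci : Fin k → Fin n → ℝ :=
    fun i j => if j = ι (Sum.inr ⟨i, Sum.inr ()⟩) then 1 else 0 with hci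
  set d : Fin k → ℝ := fun _ => -1 with hd
  set F : Matrix (Fin m) (Fin n) ℝ :=
    fun r j => if j = ι (Sum.inl r) then 1 else 0 with hF
  set g : Fin m → ℝ := fun _ => 1 with hg
  set c : Fin n → ℝ := fun j => ∑ i, ci i j with hc
  have dot_ind : ∀ (a : Fin n) (z : Fin n → ℝ),
      (fun j => if j = a then (1:ℝ) else 0) ⬝ᵥ z = z a := by
    intro a z
    simp [dotProduct, Finset.sum_ite_eq', ite_mul]
  have hci_dot : ∀ i z, ci i ⬝ᵥ z = z (ι (Sum.inr ⟨i, Sum.inr ()⟩)) := by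
    intro i z; exact dot_ind _ z
  have hA_mul : ∀ i z r, (A i).mulVec z r = z (ι (Sum.inr ⟨i, Sum.inl r⟩)) := by
    intro i z r
    simp [hA, mulVec, dotProduct, Finset.sum_ite_eq', ite_mul]
  have hF_mul : ∀ z r, F.mulVec z r = z (ι (Sum.inl r)) := by
    intro z r
    simp [hF, mulVec, dotProduct, Finset.sum_ite_eq', ite_mul]
  have hc_dot : ∀ z, c ⬝ᵥ z = ∑ i, z (ι (Sum.inr ⟨i, Sum.inr ()⟩)) := by
    intro z
    have h1 : c ⬝ᵥ z = ∑ i, ci i ⬝ᵥ z := by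
      simp only [hc, dotProduct, Finset.sum_mul]
      exact Finset.sum_comm
    rw [h1]
    exact Finset.sum_congr rfl fun i _ => hci_dot i z
  -- the candidate optimal point
  set x₀ : Fin n → ℝ := fun j => if ∃ t, ι t = j then 1 else 0 with hx₀
  have hx₀ι : ∀ t, x₀ (ι t) = 1 := by
    intro t; simp [hx₀]
  have hfeas₀ : SOCPFeasible A b ci d F g x₀ := by
    constructor
    · intro i
      have : ∀ j : Fin (mi i), ((A i).mulVec x₀ j + b i j) ^ 2 = 0 := by
        intro j; rw [hA_mul, hx₀ι]; simp [hb]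
      rw [Finset.sum_congr rfl fun j _ => this j]
      rw [hci_dot, hx₀ι]
      simp [hd]
    · funext r
      rw [hF_mul, hx₀ι]
  -- lower bound on objective for feasible points
  have hlb : ∀ z : Fin n → ℝ, SOCPFeasible A b ci d F g z → (k : ℝ) ≤ c ⬝ᵥ z := by
    intro z ⟨h1, _⟩
    have : ∀ i : Fin k, (1:ℝ) ≤ z (ι (Sum.inr ⟨i, Sum.inr ()⟩)) := by
      intro i
      have h0 := (Real.sqrt_nonneg _).trans (h1 i)
      rw [hci_dot] at h0
      simp [hd] at h0
      linarith
    rw [hc_dot]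
    calc (k:ℝ) = ∑ _i : Fin k, (1:ℝ) := by simp
      _ ≤ _ := Finset.sum_le_sum fun i _ => this i
  have hval₀ : c ⬝ᵥ x₀ = (k : ℝ) := by
    rw [hc_dot]; simp [hx₀ι]
  -- nonzero set of x₀ is exactly the image of ι
  have hfilter₀ : (Finset.univ.filter fun i => x₀ i ≠ 0) = Finset.univ.image ι := by
    ext j
    simp only [Finset.mem_filter, Finset.mem_univ, true_and, hx₀]
    constructor
    · intro h
      by_cases hc2 : ∃ t, ι t = j
      · obtain ⟨t, ht⟩ := hc2
        exact Finset.mem_image.mpr ⟨t, Finset.mem_univ t, ht⟩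
      · exact absurd (if_neg hc2) h
    · intro h
      obtain ⟨t, -, ht⟩ := Finset.mem_image.mp h
      rw [if_pos ⟨t, ht⟩]; norm_num
  have hcard_img : (Finset.univ.image ι).card = m + ∑ i, (mi i + 1) := by
    rw [Finset.card_image_of_injective _ ι.injective, Finset.card_univ, hcardT]
  refine ⟨A, b, ci, d, F, g, c, ⟨x₀, hfeas₀⟩, hlb,
    ⟨x₀, hfeas₀, hval₀, by rw [hfilter₀, hcard_img]⟩, ?_⟩
  intro y hy hopt
  -- optimal value is k
  have hval : c ⬝ᵥ y = (k : ℝ) :=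
    le_antisymm (hval₀ ▸ hopt x₀ hfeas₀) (hlb y hy)
  obtain ⟨h1, h2⟩ := hy
  -- each ci i ⬝ y = 1
  have hge : ∀ i : Fin k, (1:ℝ) ≤ y (ι (Sum.inr ⟨i, Sum.inr ()⟩)) := by
    intro i
    have h0 := (Real.sqrt_nonneg _).trans (h1 i)
    rw [hci_dot] at h0
    simp [hd] at h0
    linarith
  have heach : ∀ i : Fin k, y (ι (Sum.inr ⟨i, Sum.inr ()⟩)) = 1 := by
    have hsum : ∑ i : Fin k, (y (ι (Sum.inr ⟨i, Sum.inr ()⟩)) - 1) = 0 := by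
      rw [hc_dot] at hval
      rw [Finset.sum_sub_distrib]
      simp [hval]
    intro i
    have := (Finset.sum_eq_zero_iff_of_nonneg
      (fun i _ => by linarith [hge i])).mp hsum i (Finset.mem_univ i)
    linarith
  -- all forced coordinates equal 1
  have hall : ∀ t : T, y (ι t) = 1 := by
    rintro (r | ⟨i, r | u⟩)
    · have := congrFun h2 r
      rw [hF_mul] at this
      exact this
    · -- cone coordinate
      have hle := h1 i
      rw [hci_dot, heach i] at hle
      simp [hd] at hle
      have hs0 : Real.sqrt (∑ j, ((A i).mulVec y j + b i j) ^ 2) = 0 :=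
        le_antisymm hle (Real.sqrt_nonneg _)
      have hsum0 : ∑ j, ((A i).mulVec y j + b i j) ^ 2 = 0 := by
        have hle0 := Real.sqrt_eq_zero'.mp hs0
        have hnn : (0:ℝ) ≤ ∑ j, ((A i).mulVec y j + b i j) ^ 2 :=
          Finset.sum_nonneg fun j _ => sq_nonneg _
        linarith
      have := (Finset.sum_eq_zero_iff_of_nonneg
        (fun j _ => sq_nonneg ((A i).mulVec y j + b i j))).mp hsum0 r (Finset.mem_univ r)
      have := pow_eq_zero_iff (n := 2) (by norm_num) |>.mp this
      rw [hA_mul] at this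
      simp [hb] at this
      linarith
    · exact heach i
  -- conclude
  have hsubset : Finset.univ.image ι ⊆ Finset.univ.filter fun j => y j ≠ 0 := by
    intro j hj
    obtain ⟨t, _, ht⟩ := Finset.mem_image.mp hj
    rw [Finset.mem_filter]
    refine ⟨Finset.mem_univ j, ?_⟩
    rw [← ht, hall t]
    norm_num
  calc m + ∑ i, (mi i + 1) = (Finset.univ.image ι).card := hcard_img.symm
    _ ≤ _ := Finset.card_le_card hsubset
end
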